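/- arXiv:2402.15841 — 4 statements merged into one kernel-verified Lean document; each statement's English description precedes it below -/
import Mathlib

section
/- Let A be a complex unital Banach algebra and let a, b ∈ A be idempotents (a² = a, b² = b). If a·b = −b·a, then a + b is group invertible and (a+b)^# = (a+b)^3. -/
/-- `x` is the group inverse of `a`. -/
def IsGroupInverse {A : Type*} [Ring A] (a x : A) : Prop :=
  a * x * a = a ∧ x * a * x = x ∧ a * x = x * a

theorem sum_idempotents_anticommute {A : Type*} [NormedRing A] [NormedAlgebra ℂ A]
    [CompleteSpace A] (a b : A) (ha : a ^ 2 = a) (hb : b ^ 2 = b)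
    (h : a * b = -(b * a)) :
    IsGroupInverse (a + b) ((a + b) ^ 3) := by
  have hs : (a + b) ^ 2 = a + b := by
    rw [sq]
    rw [sq] at ha hb
    rw [mul_add, add_mul, add_mul, h, ha, hb]
    abel
  have h3 : (a + b) ^ 3 = a + b := by
    rw [pow_succ, hs, ← sq, hs]
  refine ⟨?_, ?_, ?_⟩ <;> rw [h3, ← sq, hs] <;> rw [← sq, hs]
end

section
/- Let A be a complex unital Banach algebra, let a, b ∈ A be idempotents (a² = a, b² = b), and let λ ∈ ℂ with λ ≠ 0 and λ ≠ −1. If a·b = λ·b·a, then a + b is group invertible and (a+b)^# = a + b − ((2+λ)/(1+λ))·a·b. -/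
theorem sum_idempotents_lambda {A : Type*} [NormedRing A] [NormedAlgebra ℂ A]
    [CompleteSpace A] (a b : A) (ha : a ^ 2 = a) (hb : b ^ 2 = b)
    (l : ℂ) (hl0 : l ≠ 0) (hl1 : l ≠ -1)
    (h : a * b = l • (b * a)) :
    IsGroupInverse (a + b) (a + b - ((2 + l) / (1 + l)) • (a * b)) := by
  have ha' : a * a = a := by rw [← pow_two]; exact ha
  have hb' : b * b = b := by rw [← pow_two]; exact hb
  have hba : b * a = l⁻¹ • (a * b) := by
    rw [h, inv_smul_smul₀ hl0]
  have e_a : a * b * a = a * b := by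
    rw [h, smul_mul_assoc, mul_assoc, ha', ← h]
  have a_e : a * (a * b) = a * b := by
    rw [← mul_assoc, ha']
  have e_b : a * b * b = a * b := by
    rw [mul_assoc, hb']
  have b_e : b * (a * b) = a * b := by
    rw [h, mul_smul_comm, ← mul_assoc, hb', ← h]
  have e_e : a * b * (a * b) = a * b := by
    rw [← mul_assoc, e_a, e_b]
  have e_e' : a * b * (a * b) = l⁻¹ • (a * b) := by
    have h0 : a * b * (a * b) = a * (b * a * b) := by noncomm_ring
    rw [h0, hba, smul_mul_assoc, e_b, mul_smul_comm, a_e]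
  have h9 : l⁻¹ • (a * b) = a * b := e_e'.symm.trans e_e
  have key : (l - 1) • (a * b) = 0 := by
    have hl : l • (a * b) = a * b := by
      nth_rewrite 1 [← h9]
      rw [smul_inv_smul₀ hl0]
    rw [sub_smul, one_smul, hl, sub_self]
  rcases eq_or_ne l 1 with rfl | hne
  · rw [one_smul] at h
    refine ⟨?_, ?_, ?_⟩ <;>
    · simp only [mul_add, add_mul, mul_sub, sub_mul, smul_mul_assoc, mul_smul_comm,
        ha', hb', ← h, e_a, a_e, e_b, b_e, e_e]
      module
  · have hab : a * b = 0 := by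
      rcases smul_eq_zero.mp key with h' | h'
      · exact absurd (sub_eq_zero.mp h') hne
      · exact h'
    have hba0 : b * a = 0 := by rw [hba, hab, smul_zero]
    refine ⟨?_, ?_, ?_⟩ <;>
    · simp only [hab, smul_zero, sub_zero, mul_add, add_mul, ha', hb', hba0,
        zero_mul, mul_zero, add_zero, zero_add]
end

section
/- Let A be a complex unital Banach algebra, let a, b ∈ A be group invertible elements, and let λ ∈ ℂ with λ ≠ −1. If a·a^#·b = λ·a, then a + b is group invertible and (a+b)^# = (1+λ)^{-1}·a^# + a^π·b^#·a^π + λ·(1+λ)^{-2}·a^π·b·b^#·a^# − (1+λ)^{-1}·a^π·b^#·a^π·b·a^#. -/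
set_option maxHeartbeats 4000000 in
theorem sum_group_inverse_aab_eq_la {A : Type*} [NormedRing A] [NormedAlgebra ℂ A]
    [CompleteSpace A] (a b ad bd : A) (l : ℂ) (hl1 : l ≠ -1)
    (ha : IsGroupInverse a ad) (hb : IsGroupInverse b bd)
    (h : a * ad * b = l • a) :
    IsGroupInverse (a + b)
      ((1 + l)⁻¹ • ad + (1 - a * ad) * bd * (1 - a * ad) +
        (l * (1 + l) ^ (-2 : ℤ)) • ((1 - a * ad) * b * bd * ad) -
        (1 + l)⁻¹ • ((1 - a * ad) * bd * (1 - a * ad) * b * ad)) := by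
  obtain ⟨ha1, ha2, ha3⟩ := ha
  obtain ⟨hb1, hb2, hb3⟩ := hb
  have hl : (1 : ℂ) + l ≠ 0 := fun h0 => hl1 (by linear_combination h0)
  have hco : (l * (1 + l) ^ (-2 : ℤ)) = l * ((1 + l) * (1 + l))⁻¹ := by
    rw [zpow_neg, zpow_two]
  rw [hco]
  -- sorted-word rewrite rules
  have rda0 : ad * a = a * ad := ha3.symm
  have rda : ∀ x : A, ad * (a * x) = a * (ad * x) := fun x => by
    rw [← mul_assoc, ← ha3, mul_assoc]
  have reb0 : bd * b = b * bd := hb3.symm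
  have reb : ∀ x : A, bd * (b * x) = b * (bd * x) := fun x => by
    rw [← mul_assoc, ← hb3, mul_assoc]
  have raad0 : a * (a * ad) = a := by rw [ha3, ← mul_assoc, ha1]
  have raad : ∀ x : A, a * (a * (ad * x)) = a * x := fun x => by
    rw [← mul_assoc, ← mul_assoc, mul_assoc a a ad, raad0]
  have radd0 : a * (ad * ad) = ad := by rw [← mul_assoc, ha3, ha2]
  have radd : ∀ x : A, a * (ad * (ad * x)) = ad * x := fun x => by
    rw [← mul_assoc, ← mul_assoc, mul_assoc a ad ad, radd0]
  have rbbe0 : b * (b * bd) = b := by rw [hb3, ← mul_assoc, hb1]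
  have rbbe : ∀ x : A, b * (b * (bd * x)) = b * x := fun x => by
    rw [← mul_assoc, ← mul_assoc, mul_assoc b b bd, rbbe0]
  have rbee0 : b * (bd * bd) = bd := by rw [← mul_assoc, hb3, hb2]
  have rbee : ∀ x : A, b * (bd * (bd * x)) = bd * x := fun x => by
    rw [← mul_assoc, ← mul_assoc, mul_assoc b bd bd, rbee0]
  have rdb0 : ad * b = l • (a * ad) := by
    have h' : ad * (a * ad * b) = ad * (l • a) := by rw [h]
    rw [mul_smul_comm, ← mul_assoc, ← mul_assoc, ha2, ← ha3] at h'
    exact h'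
  have rdb : ∀ x : A, ad * (b * x) = l • (a * (ad * x)) := fun x => by
    rw [← mul_assoc, rdb0, smul_mul_assoc, mul_assoc]
  have rab0 : a * b = l • (a * a) := by
    have h' : a * (a * ad * b) = a * (l • a) := by rw [h]
    rw [mul_smul_comm, ← mul_assoc, raad0] at h'
    exact h'
  have rab : ∀ x : A, a * (b * x) = l • (a * (a * x)) := fun x => by
    rw [← mul_assoc, rab0, smul_mul_assoc, mul_assoc]
  have p1 : ad * (a * ad) = ad := by rw [← mul_assoc, ha2]
  rcases eq_or_ne l 0 with rfl | hl0
  · -- case l = 0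
    have rdb0' : ad * b = 0 := by rw [rdb0, zero_smul]
    have rab0' : a * b = 0 := by rw [rab0, zero_smul]
    have rae0 : a * bd = 0 := by
      conv_lhs => rw [← rbee0, ← mul_assoc, rab0', zero_mul]
    have rde0 : ad * bd = 0 := by
      conv_lhs => rw [← rbee0, ← mul_assoc, rdb0', zero_mul]
    have rae : ∀ x : A, a * (bd * x) = 0 := fun x => by
      rw [← mul_assoc, rae0, zero_mul]
    have rde : ∀ x : A, ad * (bd * x) = 0 := fun x => by
      rw [← mul_assoc, rde0, zero_mul]
    refine ⟨?_, ?_, ?_⟩ <;>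
      · simp only [mul_add, add_mul, mul_sub, sub_mul, mul_one, one_mul,
          smul_mul_assoc, mul_smul_comm, smul_smul, mul_assoc,
          rda, rda0, reb, reb0, raad, raad0, radd, radd0, rbbe, rbbe0,
          rbee, rbee0, rdb, rdb0, rab, rab0, rae, rae0, rde, rde0,
          smul_add, smul_sub, smul_zero, zero_smul, mul_zero, zero_mul,
          add_zero, zero_add, sub_zero, zero_sub]
        match_scalars <;> field_simp [mul_ne_zero_iff, hl] <;> ring
  · -- case l ≠ 0
    have key : (l * l) • (a * bd) = l • (a * ad) := by
      have e1 : ad * b * (b * bd) = (l * l) • (a * bd) := by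
        rw [rdb0, smul_mul_assoc, ← mul_assoc, h, smul_mul_assoc, smul_smul]
      have e2 : ad * b * (b * bd) = l • (a * ad) := by
        rw [mul_assoc, rbbe0, rdb0]
      rw [← e1, e2]
    have rae0 : a * bd = l⁻¹ • (a * ad) := by
      calc a * bd = ((l * l)⁻¹ * (l * l)) • (a * bd) := by
            rw [inv_mul_cancel₀ (mul_ne_zero hl0 hl0), one_smul]
        _ = (l * l)⁻¹ • ((l * l) • (a * bd)) := (smul_smul _ _ _).symm
        _ = (l * l)⁻¹ • (l • (a * ad)) := by rw [key]
        _ = l⁻¹ • (a * ad) := by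
            rw [smul_smul]; congr 1; field_simp
    have rae : ∀ x : A, a * (bd * x) = l⁻¹ • (a * (ad * x)) := fun x => by
      rw [← mul_assoc, rae0, smul_mul_assoc, mul_assoc]
    have pbd : a * ad * bd = l⁻¹ • ad := by
      rw [ha3, mul_assoc, rae0, mul_smul_comm, ← mul_assoc, ha2]
    have rde0 : ad * bd = l⁻¹ • (ad * ad) := by
      conv_lhs => rw [← p1]
      rw [mul_assoc, pbd, mul_smul_comm]
    have rde : ∀ x : A, ad * (bd * x) = l⁻¹ • (ad * (ad * x)) := fun x => by
      rw [← mul_assoc, rde0, smul_mul_assoc, mul_assoc]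
    obtain ⟨u, hu⟩ : ∃ u : ℂ, u = (1 + l)⁻¹ := ⟨_, rfl⟩
    obtain ⟨v, hv⟩ : ∃ v : ℂ, v = l⁻¹ := ⟨_, rfl⟩
    rw [show ((1 + l) * (1 + l) : ℂ)⁻¹ = u * u by rw [hu, mul_inv], ← hu]
    simp only [← hv] at rae0 rae rde0 rde
    refine ⟨?_, ?_, ?_⟩ <;>
      · simp only [mul_add, add_mul, mul_sub, sub_mul, mul_one, one_mul,
          smul_mul_assoc, mul_smul_comm, smul_smul, mul_assoc,
          rda, rda0, reb, reb0, raad, raad0, radd, radd0, rbbe, rbbe0,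
          rbee, rbee0, rdb, rdb0, rab, rab0, rae, rae0, rde, rde0,
          smul_add, smul_sub, smul_zero, zero_smul, mul_zero, zero_mul,
          add_zero, zero_add, sub_zero, zero_sub]
        match_scalars
        all_goals try ring1
        all_goals try simp only [hu, hv]
        all_goals try field_simp [mul_ne_zero_iff, hl0, hl]
        all_goals try ring1
end

section
/- Let A be a complex unital Banach algebra, let a, b ∈ A be group invertible elements, and let λ ∈ ℂ. If a·b·b^# = λ·b, then b^π·a·b^π = b^π·a, and the element b^π·a is group invertible with group inverse (b^π·a)^# = b^π·a^#·b^π. -/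
theorem bpi_a_group_inverse {A : Type*} [NormedRing A] [NormedAlgebra ℂ A]
    [CompleteSpace A] (a b ad bd : A) (l : ℂ)
    (ha : IsGroupInverse a ad) (hb : IsGroupInverse b bd)
    (h : a * b * bd = l • b) :
    (1 - b * bd) * a * (1 - b * bd) = (1 - b * bd) * a ∧
      IsGroupInverse ((1 - b * bd) * a) ((1 - b * bd) * ad * (1 - b * bd)) := by
  obtain ⟨ha1, ha2, ha3⟩ := ha
  obtain ⟨hb1, hb2, hb3⟩ := hb
  -- basic facts
  have hae : a * (b * bd) = l • b := by rw [← mul_assoc]; exact h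
  have hpb : (1 - b * bd) * b = 0 := by rw [sub_mul, one_mul, hb1, sub_self]
  have hpae : (1 - b * bd) * a * (b * bd) = 0 := by
    rw [mul_assoc, hae, mul_smul_comm, hpb, smul_zero]
  have hpap : (1 - b * bd) * a * (1 - b * bd) = (1 - b * bd) * a := by
    rw [mul_sub, mul_one, hpae, sub_zero]
  have heae : (b * bd) * (a * (b * bd)) = a * (b * bd) := by
    rw [hae, mul_smul_comm, hb1]
  -- the key fact : (1 - b*bd) * ad * (b*bd) = 0
  have hpde : (1 - b * bd) * ad * (b * bd) = 0 := by
    by_cases hl : l = 0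
    · -- if l = 0 then a * (b*bd) = 0, hence ad * (b*bd) = 0
      have hae0 : a * (b * bd) = 0 := by rw [hae, hl, zero_smul]
      have hde0 : ad * (b * bd) = 0 := by
        calc ad * (b * bd) = (ad * a * ad) * (b * bd) := by rw [ha2]
          _ = ad * (a * ad) * (b * bd) := by noncomm_ring
          _ = ad * (ad * a) * (b * bd) := by rw [ha3]
          _ = (ad * ad) * (a * (b * bd)) := by noncomm_ring
          _ = 0 := by rw [hae0, mul_zero]
      rw [mul_assoc, hde0, mul_zero]
    · -- if l ≠ 0, first show (1-b*bd) * ad * (b*b) = 0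
      have hstar : (1 - b * bd) * (a * (ad * (a * (b * bd)))) = 0 := by
        calc (1 - b * bd) * (a * (ad * (a * (b * bd))))
            = (1 - b * bd) * ((a * ad * a) * (b * bd)) := by noncomm_ring
          _ = (1 - b * bd) * (a * (b * bd)) := by rw [ha1]
          _ = (1 - b * bd) * a * (b * bd) := by rw [mul_assoc]
          _ = 0 := hpae
      have hexp : (1 - b * bd) * (a * (ad * (a * (b * bd))))
          = (l * l) • ((1 - b * bd) * (ad * (b * b))) := by
        calc (1 - b * bd) * (a * (ad * (a * (b * bd))))
            = (1 - b * bd) * (a * (ad * ((b * bd) * (a * (b * bd))))) := by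
              conv_lhs => rw [← heae]
          _ = (1 - b * bd) * ((a * ad) * ((b * bd) * (a * (b * bd)))) := by noncomm_ring
          _ = (1 - b * bd) * ((ad * a) * ((b * bd) * (a * (b * bd)))) := by rw [ha3]
          _ = (1 - b * bd) * (ad * ((a * (b * bd)) * (a * (b * bd)))) := by noncomm_ring
          _ = (1 - b * bd) * (ad * ((l • b) * (l • b))) := by rw [hae]
          _ = (l * l) • ((1 - b * bd) * (ad * (b * b))) := by
              simp only [smul_mul_assoc, mul_smul_comm, smul_smul]
      have hkey : (1 - b * bd) * (ad * (b * b)) = 0 := by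
        have := hstar.symm.trans hexp
        rcases smul_eq_zero.mp this.symm with h' | h'
        · exact absurd h' (mul_ne_zero hl hl)
        · exact h'
      have hbb : (b * b) * (bd * bd) = b * bd := by
        calc (b * b) * (bd * bd) = (b * (b * bd)) * bd := by noncomm_ring
          _ = (b * (bd * b)) * bd := by rw [hb3]
          _ = b * ((bd * b) * bd) := by noncomm_ring
          _ = b * bd := by rw [hb2]
      calc (1 - b * bd) * ad * (b * bd)
          = (1 - b * bd) * ad * ((b * b) * (bd * bd)) := by rw [hbb]
        _ = ((1 - b * bd) * (ad * (b * b))) * (bd * bd) := by noncomm_ring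
        _ = 0 := by rw [hkey, zero_mul]
  -- consequences
  have hpdp : (1 - b * bd) * ad * (1 - b * bd) = (1 - b * bd) * ad := by
    rw [mul_sub, mul_one, hpde, sub_zero]
  have hpdb : (1 - b * bd) * ad * b = 0 := by
    have h' : ((1 - b * bd) * ad * (b * bd)) * b = (1 - b * bd) * ad * b := by
      rw [mul_assoc ((1 - b * bd) * ad) (b * bd) b, mul_assoc b bd b,
        ← mul_assoc b bd b, hb1]
    rw [← h', hpde, zero_mul]
  have hxa : (1 - b * bd) * ad * a * (1 - b * bd) = (1 - b * bd) * ad * a := by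
    have h' : (1 - b * bd) * ad * a * (b * bd) = 0 := by
      rw [mul_assoc ((1 - b * bd) * ad) a (b * bd), hae, mul_smul_comm, hpdb, smul_zero]
    rw [mul_sub, mul_one, h', sub_zero]
  have hP : (1 - b * bd) * (1 - b * bd) = 1 - b * bd := by
    have hEE : (b * bd) * (b * bd) = b * bd := by
      rw [mul_assoc b bd (b * bd), ← mul_assoc bd b bd, hb2]
    rw [mul_sub, mul_one, sub_mul, one_mul, hEE, sub_self, sub_zero]
  have hxq : ((1 - b * bd) * ad * (1 - b * bd)) * ((1 - b * bd) * a)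
      = (1 - b * bd) * ad * a := by
    calc ((1 - b * bd) * ad * (1 - b * bd)) * ((1 - b * bd) * a)
        = ((1 - b * bd) * ad * ((1 - b * bd) * (1 - b * bd))) * a := by noncomm_ring
      _ = ((1 - b * bd) * ad * (1 - b * bd)) * a := by rw [hP]
      _ = ((1 - b * bd) * ad) * a := by rw [hpdp]
  refine ⟨hpap, ?_, ?_, ?_⟩
  · -- q * x * q = q
    calc ((1 - b * bd) * a) * ((1 - b * bd) * ad * (1 - b * bd)) * ((1 - b * bd) * a)
        = ((1 - b * bd) * a) * (((1 - b * bd) * ad * (1 - b * bd)) * ((1 - b * bd) * a)) := by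
          rw [mul_assoc]
      _ = ((1 - b * bd) * a) * ((1 - b * bd) * ad * a) := by rw [hxq]
      _ = ((1 - b * bd) * a * (1 - b * bd)) * (ad * a) := by noncomm_ring
      _ = ((1 - b * bd) * a) * (ad * a) := by rw [hpap]
      _ = (1 - b * bd) * (a * ad * a) := by noncomm_ring
      _ = (1 - b * bd) * a := by rw [ha1]
  · -- x * q * x = x
    calc ((1 - b * bd) * ad * (1 - b * bd)) * ((1 - b * bd) * a) * ((1 - b * bd) * ad * (1 - b * bd))
        = ((1 - b * bd) * ad * a) * ((1 - b * bd) * ad * (1 - b * bd)) := by rw [hxq]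
      _ = ((1 - b * bd) * ad * a * (1 - b * bd)) * (ad * (1 - b * bd)) := by noncomm_ring
      _ = ((1 - b * bd) * ad * a) * (ad * (1 - b * bd)) := by rw [hxa]
      _ = ((1 - b * bd) * (ad * a * ad)) * (1 - b * bd) := by noncomm_ring
      _ = ((1 - b * bd) * ad) * (1 - b * bd) := by rw [ha2]
  · -- q * x = x * q
    calc ((1 - b * bd) * a) * ((1 - b * bd) * ad * (1 - b * bd))
        = (((1 - b * bd) * a * (1 - b * bd)) * ad) * (1 - b * bd) := by noncomm_ring
      _ = (((1 - b * bd) * a) * ad) * (1 - b * bd) := by rw [hpap]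
      _ = ((1 - b * bd) * (a * ad)) * (1 - b * bd) := by noncomm_ring
      _ = ((1 - b * bd) * (ad * a)) * (1 - b * bd) := by rw [ha3]
      _ = ((1 - b * bd) * ad * a) * (1 - b * bd) := by noncomm_ring
      _ = (1 - b * bd) * ad * a := by rw [hxa]
      _ = ((1 - b * bd) * ad * (1 - b * bd)) * ((1 - b * bd) * a) := hxq.symm
end
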